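/- Let n ≥ 2 and let X_1, …, X_n be independent random variables, where X_i is Gaussian with mean μ_i and variance σ_i², with μ_i ≥ 0 for every i. Then E[max(X_1, …, X_n)] ≥ (1 − 2^{1−n}) · E[max(0, X_1, …, X_n)]. -/

import Mathlib

open MeasureTheory ProbabilityTheory Set
open scoped NNReal

/-!
Write `M = max_i X_i`, so that `E[M] = E[M⁺] - E[M⁻]`. Since `M < 0` only when every `X_j < 0`,
`M⁻ ≤ X₀⁻ · ∏_{j ≠ 0} 1{X_j < 0}`, and independence gives `E[M⁻] ≤ E[X₀⁻] · ∏_{j ≠ 0} P(X_j < 0)`.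
A Gaussian with nonnegative mean is negative with probability at most `1/2` (symmetry about the
mean), and `E[X₀⁻] ≤ E[X₀⁺] ≤ E[M⁺]` because `E[X₀⁺] - E[X₀⁻] = E[X₀] ≥ 0`.
Hence `E[M⁻] ≤ 2^{1-n} E[M⁺]`.
-/

section PosNegPart

variable {α : Type*} [MeasurableSpace α] {μ : Measure α}

lemma integral_eq_integral_posPart_sub_integral_negPart {f : α → ℝ} (hf : Integrable f μ) :
    ∫ x, f x ∂μ = ∫ x, (f x)⁺ ∂μ - ∫ x, (f x)⁻ ∂μ := by
  have h₁ := integral_abs_eq_two_mul_integral_posPart_sub_integral hf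
  have h₂ := integral_abs_eq_two_mul_integral_negPart_add_integral hf
  linarith

lemma integral_negPart_le_integral_posPart {f : α → ℝ} (hf : Integrable f μ)
    (h : 0 ≤ ∫ x, f x ∂μ) : ∫ x, (f x)⁻ ∂μ ≤ ∫ x, (f x)⁺ ∂μ := by
  linarith [integral_eq_integral_posPart_sub_integral_negPart hf]

lemma integrable_iSup {ι : Type*} [Fintype ι] [Nonempty ι] {f : ι → α → ℝ}
    (hf : ∀ i, Integrable (f i) μ) : Integrable (fun x ↦ ⨆ i, f i x) μ := by
  have h : (fun x ↦ ⨆ i, f i x) = Finset.univ.sup' Finset.univ_nonempty f := by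
    ext x; simp only [Finset.sup'_apply, Finset.sup'_univ_eq_ciSup]
  rw [h]
  exact Finset.sup'_induction (p := (Integrable · μ)) _ _ (fun _ hg _ hh ↦ hg.sup hh)
    fun i _ ↦ hf i

end PosNegPart

lemma gaussianReal_real_Iio_zero_le_half {m : ℝ} (hm : 0 ≤ m) (v : ℝ≥0) :
    (gaussianReal m v).real (Iio 0) ≤ 2⁻¹ := by
  set ν := gaussianReal m v
  have hsymm : ν.real (Iio m) = ν.real (Ioi m) := by
    have hmap : ν.map (2 * m - ·) = ν := by
      rw [gaussianReal_map_const_sub, two_mul, add_sub_cancel_right]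
    have hpre : (2 * m - ·) ⁻¹' Ioi m = Iio m := by
      ext x
      simp only [mem_preimage, mem_Ioi, mem_Iio]
      constructor <;> intro h <;> linarith
    rw [← hmap, map_measureReal_apply (by fun_prop) measurableSet_Ioi, hpre, hmap]
  have htotal : ν.real (Iio m) + ν.real (Ioi m) ≤ 1 := by
    rw [← measureReal_union (Iio_disjoint_Ioi_same) measurableSet_Ioi]
    exact measureReal_le_one
  calc ν.real (Iio 0) ≤ ν.real (Iio m) := measureReal_mono (Iio_subset_Iio hm)
    _ ≤ 2⁻¹ := by linarith

section MaxNegPart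

variable {ι : Type*} [Fintype ι] [DecidableEq ι]

lemma negPart_iSup_le_mul_prod_indicator (x : ι → ℝ) (i₀ : ι) :
    (⨆ i, x i)⁻ ≤ (x i₀)⁻ * ∏ j ∈ {i₀}ᶜ, (Iio 0).indicator 1 (x j) := by
  have hle : ∀ i, x i ≤ ⨆ i, x i := le_ciSup (Finite.bddAbove_range x)
  by_cases hneg : ∀ j ∈ ({i₀}ᶜ : Finset ι), x j < 0
  · rw [Finset.prod_eq_one fun j hj ↦ indicator_of_mem (hneg j hj) 1, mul_one]
    exact negPart_anti (hle i₀)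
  · obtain ⟨j, -, hj⟩ := not_forall₂.mp hneg
    rw [negPart_eq_zero.mpr ((not_lt.mp hj).trans (hle j))]
    exact mul_nonneg (negPart_nonneg _)
      (Finset.prod_nonneg fun k _ ↦ indicator_nonneg (fun _ _ ↦ zero_le_one) _)

variable {Ω : Type*} [MeasurableSpace Ω] {P : Measure Ω} {X : ι → Ω → ℝ}

lemma integral_negPart_iSup_le (hindep : iIndepFun X P) (hmeas : ∀ i, Measurable (X i))
    (i₀ : ι) (hint : Integrable (X i₀) P) :
    ∫ ω, (⨆ i, X i ω)⁻ ∂P ≤ (∫ ω, (X i₀ ω)⁻ ∂P) * ∏ j ∈ {i₀}ᶜ, P.real (X j ⁻¹' Iio 0) := by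
  let f : ι → ℝ → ℝ := fun i ↦ if i = i₀ then (·⁻) else (Iio 0).indicator 1
  have split (G : ι → (ℝ → ℝ) → ℝ) :
      ∏ i, G i (f i) = G i₀ (·⁻) * ∏ j ∈ {i₀}ᶜ, G j ((Iio 0).indicator 1) := by
    rw [Fintype.prod_eq_mul_prod_compl i₀]
    congr 1
    · simp [f]
    · exact Finset.prod_congr rfl fun j hj ↦ by simp_all [f]
  have hf : ∀ i, Measurable (f i) := fun i ↦ by
    by_cases h : i = i₀
    · simpa [f, h] using measurable_id.negPart
    · simpa [f, h] using measurable_one.indicator measurableSet_Iio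
  have hbound : Integrable (fun ω ↦ ∏ i, f i (X i ω)) P := by
    refine hint.neg_part.mono' (Finset.aestronglyMeasurable_fun_prod _
      fun i _ ↦ ((hf i).comp (hmeas i)).aestronglyMeasurable) (ae_of_all _ fun ω ↦ ?_)
    have h₀ (y : ℝ) : 0 ≤ (Iio (0 : ℝ)).indicator (1 : ℝ → ℝ) y :=
      indicator_nonneg (fun _ _ ↦ zero_le_one) y
    have h₁ (y : ℝ) : (Iio (0 : ℝ)).indicator (1 : ℝ → ℝ) y ≤ 1 :=
      indicator_le_self' (fun _ _ ↦ zero_le_one) y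
    have hprod := Finset.prod_nonneg (s := {i₀}ᶜ) fun j _ ↦ h₀ (X j ω)
    rw [split fun i φ ↦ φ (X i ω), Real.norm_of_nonneg (mul_nonneg (negPart_nonneg _) hprod)]
    exact mul_le_of_le_one_right (negPart_nonneg _)
      (Finset.prod_le_one (fun j _ ↦ h₀ _) fun j _ ↦ h₁ _)
  calc ∫ ω, (⨆ i, X i ω)⁻ ∂P ≤ ∫ ω, ∏ i, f i (X i ω) ∂P := by
        refine integral_mono_of_nonneg (ae_of_all _ fun ω ↦ negPart_nonneg _) hbound
          (ae_of_all _ fun ω ↦ ?_)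
        simpa only [split fun i φ ↦ φ (X i ω)] using negPart_iSup_le_mul_prod_indicator _ i₀
    _ = ∏ i, ∫ ω, f i (X i ω) ∂P :=
        hindep.integral_fun_prod_comp (fun i ↦ (hmeas i).aemeasurable)
          fun i ↦ (hf i).aestronglyMeasurable
    _ = (∫ ω, (X i₀ ω)⁻ ∂P) * ∏ j ∈ {i₀}ᶜ, P.real (X j ⁻¹' Iio 0) := by
        rw [split fun i φ ↦ ∫ ω, φ (X i ω) ∂P]
        congr 1
        refine Finset.prod_congr rfl fun j _ ↦ ?_
        rw [← integral_indicator_one ((hmeas j) measurableSet_Iio)]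
        rfl

lemma integral_negPart_iSup_le_pow_mul (hindep : iIndepFun X P) (hmeas : ∀ i, Measurable (X i))
    (hint : ∀ i, Integrable (X i) P) (i₀ : ι) (hmean : 0 ≤ ∫ ω, X i₀ ω ∂P) {p : ℝ}
    (hp : ∀ j ≠ i₀, P.real (X j ⁻¹' Iio 0) ≤ p) :
    ∫ ω, (⨆ i, X i ω)⁻ ∂P ≤ p ^ (Fintype.card ι - 1) * ∫ ω, (⨆ i, X i ω)⁺ ∂P := by
  have : Nonempty ι := ⟨i₀⟩
  have hsupPos : ∫ ω, (X i₀ ω)⁺ ∂P ≤ ∫ ω, (⨆ i, X i ω)⁺ ∂P :=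
    integral_mono (hint i₀).pos_part (integrable_iSup hint).pos_part
      fun ω ↦ posPart_mono (le_ciSup (Finite.bddAbove_range fun i ↦ X i ω) i₀)
  have hprod : ∏ j ∈ {i₀}ᶜ, P.real (X j ⁻¹' Iio 0) ≤ p ^ (Fintype.card ι - 1) := by
    calc ∏ j ∈ {i₀}ᶜ, P.real (X j ⁻¹' Iio 0) ≤ ∏ _j ∈ ({i₀}ᶜ : Finset ι), p :=
          Finset.prod_le_prod (fun _ _ ↦ measureReal_nonneg) fun j hj ↦ hp j (by simpa using hj)
      _ = p ^ (Fintype.card ι - 1) := by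
          rw [Finset.prod_const, Finset.card_compl, Finset.card_singleton]
  calc ∫ ω, (⨆ i, X i ω)⁻ ∂P
      ≤ (∫ ω, (X i₀ ω)⁻ ∂P) * ∏ j ∈ {i₀}ᶜ, P.real (X j ⁻¹' Iio 0) :=
        integral_negPart_iSup_le hindep hmeas i₀ (hint i₀)
    _ ≤ (∫ ω, (⨆ i, X i ω)⁺ ∂P) * ∏ j ∈ {i₀}ᶜ, P.real (X j ⁻¹' Iio 0) :=
        mul_le_mul_of_nonneg_right
          ((integral_negPart_le_integral_posPart (hint i₀) hmean).trans hsupPos)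
          (Finset.prod_nonneg fun _ _ ↦ measureReal_nonneg)
    _ ≤ (∫ ω, (⨆ i, X i ω)⁺ ∂P) * p ^ (Fintype.card ι - 1) :=
        mul_le_mul_of_nonneg_left hprod (integral_nonneg fun _ ↦ posPart_nonneg _)
    _ = p ^ (Fintype.card ι - 1) * ∫ ω, (⨆ i, X i ω)⁺ ∂P := mul_comm _ _

end MaxNegPart

theorem expected_max_ge_positive_part
    (n : ℕ) (hn : 2 ≤ n)
    (Ω : Type) [MeasurableSpace Ω] (P : Measure Ω)
    (μ σ : Fin n → ℝ) (hμ : ∀ i, 0 ≤ μ i)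
    (X : Fin n → Ω → ℝ) (hmeas : ∀ i, Measurable (X i))
    (hindep : iIndepFun X P)
    (hX : ∀ i, Measure.map (X i) P = gaussianReal (μ i) (Real.toNNReal (σ i ^ 2))) :
    (1 - (2 : ℝ) ^ (1 - (n : ℤ))) * (∫ ω, max 0 (⨆ i, X i ω) ∂P) ≤ ∫ ω, ⨆ i, X i ω ∂P := by
  have hlaw (i : Fin n) : HasLaw (X i) (gaussianReal (μ i) (σ i ^ 2).toNNReal) P :=
    ⟨(hmeas i).aemeasurable, hX i⟩
  have hint (i : Fin n) : Integrable (X i) P :=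
    (integrable_map_measure aestronglyMeasurable_id (hmeas i).aemeasurable).mp
      (hX i ▸ (memLp_id_gaussianReal 1).integrable le_rfl)
  have hmean (i : Fin n) : 0 ≤ ∫ ω, X i ω ∂P := by
    rw [(hlaw i).integral_eq, integral_id_gaussianReal]
    exact hμ i
  have hhalf (j : Fin n) : P.real (X j ⁻¹' Iio 0) ≤ 2⁻¹ := by
    rw [← map_measureReal_apply (hmeas j) measurableSet_Iio, hX j]
    exact gaussianReal_real_Iio_zero_le_half (hμ j) _
  let i₀ : Fin n := ⟨0, by omega⟩
  have : Nonempty (Fin n) := ⟨i₀⟩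
  have hneg := integral_negPart_iSup_le_pow_mul hindep hmeas hint i₀ (hmean i₀) fun j _ ↦ hhalf j
  have hpow : (2 : ℝ)⁻¹ ^ (Fintype.card (Fin n) - 1) = 2 ^ (1 - (n : ℤ)) := by
    rw [Fintype.card_fin, inv_pow, ← zpow_natCast, ← zpow_neg]
    congr 1
    omega
  rw [integral_eq_integral_posPart_sub_integral_negPart (integrable_iSup hint), ← hpow]
  have hpos : ∫ ω, max 0 (⨆ i, X i ω) ∂P = ∫ ω, (⨆ i, X i ω)⁺ ∂P := by
    simp only [posPart_def, max_comm]
  rw [hpos]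
  linarith
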